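/- For every high-multiplicity scheduling instance on identical machines there exists a schedule x* that minimizes Cenvy (i.e., Cenvy(x*) ≤ Cenvy(x) for every schedule x) and has gap size at most pmax, i.e., x* i₁ j ≤ x* i₂ j + pmax for all machines i₁, i₂ and all job types j. -/

import Mathlib

/-- A schedule assigns `x i j` jobs of type `j` to machine `i`, placing all `n j` jobs. -/
def IsSchedule {m d : ℕ} (n : Fin d → ℕ) (x : Fin m → Fin d → ℕ) : Prop :=
  ∀ j, ∑ i, x i j = n j

/-- The load of machine `i` under schedule `x`. -/
def load {m d : ℕ} (p : Fin d → ℕ) (x : Fin m → Fin d → ℕ) (i : Fin m) : ℕ :=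
  ∑ j, x i j * p j

/-- The makespan: the maximum machine load. -/
def Cmax {m d : ℕ} (p : Fin d → ℕ) (x : Fin m → Fin d → ℕ) : ℕ :=
  Finset.univ.sup (load p x)

/-- The minimum machine load. -/
noncomputable def Cmin {m d : ℕ} (p : Fin d → ℕ) (x : Fin m → Fin d → ℕ) : ℕ :=
  sInf (Set.range (load p x))

/-- The envy value: maximum load minus minimum load. -/
noncomputable def Cenvy {m d : ℕ} (p : Fin d → ℕ) (x : Fin m → Fin d → ℕ) : ℕ :=
  Cmax p x - Cmin p x

/-!
Among the Cenvy-minimal schedules take one minimizing the sum of squares of its entries. If some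
job type `j` had `x i₁ j > x i₂ j + pmax`, we could exchange jobs between `i₁` and `i₂` without
spreading their loads apart and strictly decrease that sum of squares. If `i₁` is heavier by at
least `p j`, one job of type `j` moves to `i₂`. Otherwise `i₂` carries more than `pmax * p j`
worth of jobs of other types in excess of `i₁`, hence more than `p j` such jobs; by pigeonhole on
prefix sums modulo `p j` some of them have total length `t * p j` with `1 ≤ t ≤ pmax`, and
swapping them for `t` jobs of type `j` leaves both loads unchanged.
-/

open Finset

theorem List.exists_sublist_length_le_dvd_sum (l : List ℕ) {q : ℕ} (hq : 0 < q)
    (hl : q ≤ l.length) : ∃ l', l'.Sublist l ∧ l' ≠ [] ∧ l'.length ≤ q ∧ q ∣ l'.sum := by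
  have of_modEq : ∀ i i' : ℕ, i < i' → i' ≤ q → (l.take i).sum ≡ (l.take i').sum [MOD q] →
      ∃ l', l'.Sublist l ∧ l' ≠ [] ∧ l'.length ≤ q ∧ q ∣ l'.sum := by
    intro i i' hii' hi' hmod
    have hsplit : (l.take i).sum + ((l.take i').drop i).sum = (l.take i').sum := by
      conv_rhs => rw [← take_append_drop i (l.take i'), take_take, min_eq_left hii'.le]
      exact (sum_append ..).symm
    refine ⟨(l.take i').drop i, (drop_sublist _ _).trans (take_sublist _ _), ?_, ?_, ?_⟩
    · rw [← length_pos_iff, length_drop, length_take]; omega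
    · rw [length_drop, length_take]; omega
    · simpa [← hsplit] using (Nat.modEq_iff_dvd' (hsplit ▸ Nat.le_add_right _ _)).mp hmod
  have : NeZero q := ⟨hq.ne'⟩
  obtain ⟨i, i', hne, heq⟩ := Fintype.exists_ne_map_eq_of_card_lt
    (fun i : Fin (q + 1) => ((l.take i).sum : ZMod q)) (by simp)
  have hmod := (ZMod.natCast_eq_natCast_iff _ _ _).mp heq
  rcases lt_or_gt_of_ne (Fin.val_ne_of_ne hne) with h | h
  · exact of_modEq i i' h (Nat.lt_succ_iff.mp i'.isLt) hmod
  · exact of_modEq i' i h (Nat.lt_succ_iff.mp i.isLt) hmod.symm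

theorem List.sum_map_eq_sum_count_mul {ι : Type*} [Fintype ι] [DecidableEq ι] (L : List ι)
    (p : ι → ℕ) : (L.map p).sum = ∑ k, L.count k * p k := by
  rw [Finset.sum_list_map_count]
  refine Finset.sum_subset (Finset.subset_univ _) fun k _ hk => ?_
  simp [List.count_eq_zero_of_not_mem (by simpa using hk)]

theorem exists_le_dotProduct_eq_mul {ι : Type*} [Fintype ι] [DecidableEq ι] {u p : ι → ℕ}
    {q P : ℕ} (hq : 0 < q) (hu : q ≤ ∑ k, u k) (hp : ∀ k, 0 < p k) (hP : ∀ k, p k ≤ P) :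
    ∃ s ≤ u, ∃ t, 0 < t ∧ t ≤ P ∧ s ⬝ᵥ p = t * q := by
  set M : Multiset ι := ∑ k, Multiset.replicate (u k) k
  have hcount (k : ι) : M.count k = u k := by
    simp [M, Multiset.count_sum', Multiset.count_replicate]
  have hcard : M.toList.length = ∑ k, u k := by simp [M]
  obtain ⟨_, hsub, hne, hlen, hdvd⟩ :=
    (M.toList.map p).exists_sublist_length_le_dvd_sum hq (by simpa [hcard])
  obtain ⟨L, hL, rfl⟩ := List.sublist_map_iff.mp hsub
  have hLM : (L : Multiset ι) ≤ M := M.coe_toList ▸ Multiset.coe_le.mpr hL.subperm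
  refine ⟨fun k => L.count k, fun k => by simpa [hcount] using Multiset.count_le_of_le k hLM,
    (L.map p).sum / q, ?_, ?_, ?_⟩
  · have := (L.map p).length_le_sum_of_one_le (List.forall_mem_map.mpr fun k _ => hp k)
    have := List.length_pos_iff.mpr hne
    exact Nat.div_pos (Nat.le_of_dvd (by omega) hdvd) hq
  · have := List.sum_le_card_nsmul (L.map p) P (List.forall_mem_map.mpr fun k _ => hP k)
    refine Nat.div_le_of_le_mul (this.trans ?_)
    simpa using Nat.mul_le_mul_right P hlen
  · rw [Nat.div_mul_cancel hdvd, List.sum_map_eq_sum_count_mul]; rfl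

theorem exists_balancing_transfer {ι : Type*} [Fintype ι] [DecidableEq ι] {p v w : ι → ℕ}
    {j : ι} (hp : ∀ k, 0 < p k) (hgap : w j + univ.sup p < v j) :
    ∃ t s, 0 < t ∧ t ≤ univ.sup p ∧ s j = 0 ∧ s ≤ w - v ∧ s ⬝ᵥ p ≤ t * p j ∧
      min (v ⬝ᵥ p) (w ⬝ᵥ p) + t * p j ≤ v ⬝ᵥ p + s ⬝ᵥ p := by
  have hpP (k : ι) : p k ≤ univ.sup p := le_sup (mem_univ k)
  by_cases hload : w ⬝ᵥ p + p j ≤ v ⬝ᵥ p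
  · exact ⟨1, 0, one_pos, (hp j).trans_le (hpP j), rfl, zero_le, by simp,
      by simp only [one_mul, zero_dotProduct, add_zero]; omega⟩
  set u := Function.update (w - v) j 0
  have hwu : w + Pi.single j (v j - w j) ≤ v + u := by
    intro k
    rcases eq_or_ne k j with rfl | hk
    · simp only [u, Pi.add_apply, Pi.single_eq_same, Function.update_self]; omega
    · simp only [u, Pi.add_apply, Pi.sub_apply, Pi.single_eq_of_ne hk, Function.update_of_ne hk]
      omega
  have hU : univ.sup p * p j < u ⬝ᵥ p := by
    have hle := dotProduct_le_dotProduct_of_nonneg_right hwu (fun k => Nat.zero_le (p k))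
    rw [add_dotProduct, add_dotProduct, single_dotProduct] at hle
    have : (univ.sup p + 1) * p j ≤ (v j - w j) * p j := Nat.mul_le_mul_right _ (by omega)
    nlinarith
  have hcard : p j ≤ ∑ k, u k := by
    have : u ⬝ᵥ p ≤ (∑ k, u k) * univ.sup p := by
      rw [Finset.sum_mul]; exact sum_le_sum fun k _ => Nat.mul_le_mul_left _ (hpP k)
    have : p j * univ.sup p < (∑ k, u k) * univ.sup p := by
      linarith [mul_comm (p j) (univ.sup p)]
    exact (lt_of_mul_lt_mul_right this (Nat.zero_le _)).le
  obtain ⟨s, hsu, t, ht, htP, hst⟩ := exists_le_dotProduct_eq_mul (hp j) hcard hp hpP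
  refine ⟨t, s, ht, htP, by simpa [u] using hsu j, fun k => (hsu k).trans ?_, hst.le, by omega⟩
  rcases eq_or_ne k j with rfl | hk <;> simp [u, *]

theorem sq_add_sq_lt_of_add_eq_of_min_lt {a b c d : ℕ} (h : a + b = c + d)
    (hmin : min a b < min c d) : c ^ 2 + d ^ 2 < a ^ 2 + b ^ 2 := by
  rcases le_total a b with hab | hab <;> rcases le_total c d with hcd | hcd <;>
    simp only [min_eq_left, min_eq_right, hab, hcd] at hmin <;> nlinarith

theorem sq_add_sq_le_of_add_eq_of_min_le {a b c d : ℕ} (h : a + b = c + d)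
    (hmin : min a b ≤ min c d) : c ^ 2 + d ^ 2 ≤ a ^ 2 + b ^ 2 := by
  rcases le_total a b with hab | hab <;> rcases le_total c d with hcd | hcd <;>
    simp only [min_eq_left, min_eq_right, hab, hcd] at hmin <;> nlinarith

theorem Finset.sum_eq_add_add_sum_compl_pair {ι M : Type*} [Fintype ι] [DecidableEq ι]
    [AddCommMonoid M] {i₁ i₂ : ι} (h : i₁ ≠ i₂) (f : ι → M) :
    ∑ i, f i = f i₁ + f i₂ + ∑ i ∈ {i₁, i₂}ᶜ, f i := by
  rw [← sum_add_sum_compl {i₁, i₂} f, sum_pair h]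

variable {m d : ℕ}

theorem exists_isSchedule (hm : 1 ≤ m) (n : Fin d → ℕ) :
    ∃ x : Fin m → Fin d → ℕ, IsSchedule n x :=
  ⟨Pi.single ⟨0, hm⟩ n, fun j => by simp [← Finset.sum_apply]⟩

theorem load_eq_dotProduct (p : Fin d → ℕ) (x : Fin m → Fin d → ℕ) (i : Fin m) :
    load p x i = x i ⬝ᵥ p := rfl

theorem Cmin_le_load (p : Fin d → ℕ) (x : Fin m → Fin d → ℕ) (i : Fin m) :
    Cmin p x ≤ load p x i :=
  Nat.sInf_le ⟨i, rfl⟩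

theorem load_le_Cmax (p : Fin d → ℕ) (x : Fin m → Fin d → ℕ) (i : Fin m) :
    load p x i ≤ Cmax p x :=
  le_sup (mem_univ i)

theorem Cenvy_le_of_forall_load_mem_Icc {p : Fin d → ℕ} {x y : Fin m → Fin d → ℕ}
    (h : ∀ i, load p y i ∈ Set.Icc (Cmin p x) (Cmax p x)) : Cenvy p y ≤ Cenvy p x := by
  have hmax : Cmax p y ≤ Cmax p x := Finset.sup_le fun i _ => (h i).2
  have hmin : Cmin p x ≤ Cmin p y := by
    rcases isEmpty_or_nonempty (Fin m) with hm | hm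
    · simp [Cmin, Set.range_eq_empty]
    · exact le_csInf (Set.range_nonempty _) (Set.forall_mem_range.2 fun i => (h i).1)
  exact tsub_le_tsub hmax hmin

def sumSq (x : Fin m → Fin d → ℕ) : ℕ :=
  ∑ i, ∑ k, x i k ^ 2

/-- Meaningful only for `a ≤ x i₁` and `b ≤ x i₂`: subtraction in `ℕ` truncates. -/
def exchange (x : Fin m → Fin d → ℕ) (i₁ i₂ : Fin m) (a b : Fin d → ℕ) : Fin m → Fin d → ℕ :=
  Function.update (Function.update x i₁ (x i₁ - a + b)) i₂ (x i₂ + a - b)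

section Exchange

variable {x : Fin m → Fin d → ℕ} {i₁ i₂ : Fin m} {a b : Fin d → ℕ}

theorem exchange_apply_left (h : i₁ ≠ i₂) : exchange x i₁ i₂ a b i₁ = x i₁ - a + b := by
  simp [exchange, h]

theorem exchange_apply_right : exchange x i₁ i₂ a b i₂ = x i₂ + a - b := by
  simp [exchange]

theorem exchange_apply_of_ne {i : Fin m} (h₁ : i ≠ i₁) (h₂ : i ≠ i₂) :
    exchange x i₁ i₂ a b i = x i := by
  simp [exchange, h₁, h₂]

theorem exchange_add_exchange (h : i₁ ≠ i₂) (ha : a ≤ x i₁) (hb : b ≤ x i₂) (k : Fin d) :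
    exchange x i₁ i₂ a b i₁ k + exchange x i₁ i₂ a b i₂ k = x i₁ k + x i₂ k := by
  have : a k ≤ x i₁ k := ha k
  have : b k ≤ x i₂ k := hb k
  simp only [exchange_apply_left h, exchange_apply_right, Pi.add_apply, Pi.sub_apply]
  omega

theorem sum_compl_pair_exchange {M : Type*} [AddCommMonoid M] (f : (Fin d → ℕ) → M) :
    ∑ i ∈ {i₁, i₂}ᶜ, f (exchange x i₁ i₂ a b i) = ∑ i ∈ {i₁, i₂}ᶜ, f (x i) :=
  sum_congr rfl fun i hi => by
    simp only [mem_compl, mem_insert, mem_singleton, not_or] at hi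
    rw [exchange_apply_of_ne hi.1 hi.2]

theorem IsSchedule.exchange {n : Fin d → ℕ} (hx : IsSchedule n x) (h : i₁ ≠ i₂)
    (ha : a ≤ x i₁) (hb : b ≤ x i₂) : IsSchedule n (exchange x i₁ i₂ a b) := by
  intro k
  rw [← hx k, sum_eq_add_add_sum_compl_pair h, sum_eq_add_add_sum_compl_pair h (fun i => x i k),
    exchange_add_exchange h ha hb k, sum_compl_pair_exchange (fun r => r k)]

theorem load_exchange_left (h : i₁ ≠ i₂) (ha : a ≤ x i₁) (p : Fin d → ℕ) :
    load p (exchange x i₁ i₂ a b) i₁ + a ⬝ᵥ p = load p x i₁ + b ⬝ᵥ p := by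
  rw [load_eq_dotProduct, load_eq_dotProduct, exchange_apply_left h, ← add_dotProduct,
    ← add_dotProduct, add_right_comm, tsub_add_cancel_of_le ha]

theorem load_exchange_right (hb : b ≤ x i₂) (p : Fin d → ℕ) :
    load p (exchange x i₁ i₂ a b) i₂ + b ⬝ᵥ p = load p x i₂ + a ⬝ᵥ p := by
  rw [load_eq_dotProduct, load_eq_dotProduct, exchange_apply_right, ← add_dotProduct,
    ← add_dotProduct, tsub_add_cancel_of_le (hb.trans le_self_add)]

theorem Cenvy_exchange_le {p : Fin d → ℕ} (h : i₁ ≠ i₂) (ha : a ≤ x i₁) (hb : b ≤ x i₂)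
    (hba : b ⬝ᵥ p ≤ a ⬝ᵥ p)
    (hspread : min (load p x i₁) (load p x i₂) + a ⬝ᵥ p ≤ load p x i₁ + b ⬝ᵥ p) :
    Cenvy p (exchange x i₁ i₂ a b) ≤ Cenvy p x := by
  refine Cenvy_le_of_forall_load_mem_Icc fun i => ?_
  have h₁ := load_exchange_left h ha p (b := b)
  have h₂ := load_exchange_right hb p (i₁ := i₁) (a := a)
  have := Cmin_le_load p x i₁
  have := Cmin_le_load p x i₂
  have := load_le_Cmax p x i₁
  have := load_le_Cmax p x i₂
  by_cases e₁ : i = i₁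
  · subst e₁; constructor <;> omega
  by_cases e₂ : i = i₂
  · subst e₂; constructor <;> omega
  rw [load_eq_dotProduct, exchange_apply_of_ne e₁ e₂]
  exact ⟨Cmin_le_load p x i, load_le_Cmax p x i⟩

theorem sumSq_exchange_lt (h : i₁ ≠ i₂) (ha : a ≤ x i₁) (hb : b ≤ x i₂)
    (hmin : ∀ k, min (x i₁ k) (x i₂ k) ≤
      min (exchange x i₁ i₂ a b i₁ k) (exchange x i₁ i₂ a b i₂ k))
    (hlt : ∃ k, min (x i₁ k) (x i₂ k) <
      min (exchange x i₁ i₂ a b i₁ k) (exchange x i₁ i₂ a b i₂ k)) :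
    sumSq (exchange x i₁ i₂ a b) < sumSq x := by
  obtain ⟨k₀, hk₀⟩ := hlt
  have hpair : ∑ k, (exchange x i₁ i₂ a b i₁ k ^ 2 + exchange x i₁ i₂ a b i₂ k ^ 2) <
      ∑ k, (x i₁ k ^ 2 + x i₂ k ^ 2) :=
    sum_lt_sum
      (fun k _ => sq_add_sq_le_of_add_eq_of_min_le (exchange_add_exchange h ha hb k).symm (hmin k))
      ⟨k₀, mem_univ _, sq_add_sq_lt_of_add_eq_of_min_lt (exchange_add_exchange h ha hb k₀).symm hk₀⟩
  rw [sum_add_distrib, sum_add_distrib] at hpair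
  rw [sumSq, sumSq, sum_eq_add_add_sum_compl_pair h,
    sum_eq_add_add_sum_compl_pair h (fun i => ∑ k, x i k ^ 2),
    sum_compl_pair_exchange (fun r => ∑ k, r k ^ 2)]
  exact add_lt_add_left hpair _

end Exchange

theorem exists_improvement_of_gap {n p : Fin d → ℕ} (hp : ∀ k, 0 < p k)
    {x : Fin m → Fin d → ℕ} (hx : IsSchedule n x) {i₁ i₂ : Fin m} {j : Fin d}
    (hgap : x i₂ j + univ.sup p < x i₁ j) :
    ∃ y : Fin m → Fin d → ℕ, IsSchedule n y ∧ Cenvy p y ≤ Cenvy p x ∧ sumSq y < sumSq x := by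
  have h : i₁ ≠ i₂ := by rintro rfl; omega
  obtain ⟨t, s, ht, htP, hsj, hs, hsp, hspread⟩ := exists_balancing_transfer hp hgap
  have ha : Pi.single j t ≤ x i₁ := by
    intro k
    rcases eq_or_ne k j with rfl | hk
    · simpa using htP.trans (le_add_self.trans hgap.le)
    · simp [hk]
  have hb : s ≤ x i₂ := hs.trans tsub_le_self
  refine ⟨exchange x i₁ i₂ (Pi.single j t) s, hx.exchange h ha hb,
    Cenvy_exchange_le h ha hb (by rw [single_dotProduct]; exact hsp)
      (by rw [single_dotProduct]; exact hspread),
    sumSq_exchange_lt h ha hb (fun k => ?_) ⟨j, ?_⟩⟩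
  all_goals simp only [exchange_apply_left h, exchange_apply_right, Pi.add_apply, Pi.sub_apply]
  · rcases eq_or_ne k j with rfl | hk
    · rw [Pi.single_eq_same, hsj]; omega
    · have : s k ≤ x i₂ k - x i₁ k := hs k
      rw [Pi.single_eq_of_ne hk]; omega
  · rw [Pi.single_eq_same, hsj]; omega

theorem exists_Cenvy_minimizer_small_gap_general (d m : ℕ) (hm : 1 ≤ m)
    (p : Fin d → ℕ) (hp : ∀ j, 1 ≤ p j) (n : Fin d → ℕ) :
    ∃ xstar : Fin m → Fin d → ℕ, IsSchedule n xstar ∧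
      (∀ x : Fin m → Fin d → ℕ, IsSchedule n x → Cenvy p xstar ≤ Cenvy p x) ∧
      ∀ (i₁ i₂ : Fin m) (j : Fin d), xstar i₁ j ≤ xstar i₂ j + Finset.univ.sup p := by
  obtain ⟨x, hx, hmin⟩ := (InvImage.wf (fun x => toLex (Cenvy p x, sumSq x)) wellFounded_lt).has_min
    {x | IsSchedule n x} (exists_isSchedule hm n)
  refine ⟨x, hx, fun y hy => ?_, fun i₁ i₂ j => ?_⟩
  · by_contra! hlt
    exact hmin y hy (Prod.Lex.toLex_lt_toLex.mpr (Or.inl hlt))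
  · by_contra! hgap
    obtain ⟨y, hy, hCenvy, hsumSq⟩ := exists_improvement_of_gap hp hx hgap
    refine hmin y hy (Prod.Lex.toLex_lt_toLex.mpr ?_)
    rcases hCenvy.lt_or_eq with hlt | heq
    · exact Or.inl hlt
    · exact Or.inr ⟨heq, hsumSq⟩

theorem exists_Cenvy_minimizer_small_gap (d m : ℕ) (hd : 1 ≤ d) (hm : 1 ≤ m)
    (p : Fin d → ℕ) (hp : ∀ j, 1 ≤ p j) (n : Fin d → ℕ) :
    ∃ xstar : Fin m → Fin d → ℕ, IsSchedule n xstar ∧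
      (∀ x : Fin m → Fin d → ℕ, IsSchedule n x → Cenvy p xstar ≤ Cenvy p x) ∧
      ∀ (i₁ i₂ : Fin m) (j : Fin d), xstar i₁ j ≤ xstar i₂ j + Finset.univ.sup p :=
  exists_Cenvy_minimizer_small_gap_general d m hm p hp n
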